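/- For all natural numbers k and l and all x, z ∈ F: (-1)^l Σ_{j=0}^{l} [l choose j]_q x^{l-j} A*_{k+j}(z) q^{k(l-j)} = (-1)^k Σ_{j=0}^{k} [k choose j]_q x^{k-j} A_{l+j}([1,-z,-x]) q^{(k-j)(k-j-1)/2}. -/

import Mathlib

open Finset

/-- The q-Pochhammer symbol `(a;q)_n = ∏_{j=0}^{n-1} (1 - a q^j)`. -/
def qPoch {F : Type*} [Field F] (q a : F) (n : ℕ) : F :=
  ∏ j ∈ Finset.range n, (1 - a * q ^ j)

/-- The q-binomial coefficient `[n choose i]_q`, equal to 0 when `i > n`. -/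
def qBinom {F : Type*} [Field F] (q : F) (n i : ℕ) : F :=
  if i ≤ n then qPoch q q n / (qPoch q q i * qPoch q q (n - i)) else 0

/-- The q-integer `[n]_q = (1-q^n)/(1-q)`. -/
def qInt {F : Type*} [Field F] (q : F) (n : ℕ) : F := (1 - q ^ n) / (1 - q)

/-- The q-dual sequence `a*_n = ∑_{i=0}^n (-1)^i [n choose i]_q q^{i(i-1)/2} a_i`. -/
def qDual {F : Type*} [Field F] (q : F) (a : ℕ → F) (n : ℕ) : F :=
  ∑ i ∈ Finset.range (n + 1), (-1 : F) ^ i * qBinom q n i * q ^ (i.choose 2) * a i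
/-- The q-factorial `[n]_q! = ∏_{j=1}^n [j]_q`. -/
def qFact {F : Type*} [Field F] (q : F) (n : ℕ) : F :=
  ∏ j ∈ Finset.range n, qInt q (j + 1)

/-- `[u,v,w]^n = ∑_{i+j+k=n} ([n]_q!/([i]_q![j]_q![k]_q!)) u^i v^j w^k`. -/
def qBracket3 {F : Type*} [Field F] (q : F) (n : ℕ) (u v w : F) : F :=
  ∑ i ∈ Finset.range (n + 1), ∑ j ∈ Finset.range (n + 1 - i),
    qFact q n / (qFact q i * qFact q j * qFact q (n - i - j)) *
      (u ^ i * v ^ j * w ^ (n - i - j))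

/-- `A_n(x) = ∑_{i=0}^n (-1)^i [n choose i]_q q^{i(i-1)/2} a_i x^{n-i}`. -/
def Apoly {F : Type*} [Field F] (q : F) (a : ℕ → F) (n : ℕ) (x : F) : F :=
  ∑ i ∈ Finset.range (n + 1), (-1 : F) ^ i * qBinom q n i * q ^ (i.choose 2) * a i * x ^ (n - i)

/-- `A*_n(x) = ∑_{i=0}^n (-1)^i [n choose i]_q a*_i x^{n-i}`. -/
def AstarPoly {F : Type*} [Field F] (q : F) (a : ℕ → F) (n : ℕ) (x : F) : F :=
  ∑ i ∈ Finset.range (n + 1), (-1 : F) ^ i * qBinom q n i * qDual q a i * x ^ (n - i)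

/-- `A_n([1,-z,-x]) = ∑_{i=0}^n (-1)^i [n choose i]_q q^{i(i-1)/2} a_i [1,-z,-x]^{n-i}`. -/
def ApolyTri {F : Type*} [Field F] (q : F) (a : ℕ → F) (n : ℕ) (z x : F) : F :=
  ∑ i ∈ Finset.range (n + 1), (-1 : F) ^ i * qBinom q n i * q ^ (i.choose 2) * a i *
    qBracket3 q (n - i) 1 (-z) (-x)

/-
Write `qConv q n f g = ∑ᵢ [n choose i]_q f i g (n - i)` for the q-binomial convolution. From
`[n choose m]_q [m choose i]_q = [n choose i]_q [n-i choose m-i]_q` it is associative, and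
`t ^ n` distributes over it as `t ^ i` and `t ^ (n - i)`. The dual sequence `a*`, the polynomials
`A*_n`, the trinomial `[u,v,w]^n` and `A_n([1,-z,-x])` are all iterated convolutions, and
associativity gives `A_n([1,-z,-x]) = (-1)^n ∑_j [n choose j]_q x^(n-j) A*_j(z)`. Substituting
this into the right-hand side, the coefficient of `A*_i(z)` is the alternating sum
`∑_j (-1)^j [k choose j]_q [l+j choose i]_q q^(k-j choose 2)`, which q-Pascal and induction on `k`
evaluate to `(-1)^k q^(k(k+l-i)) [l choose i-k]_q` (zero for `i < k`).
-/

section QBinomial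

variable {F : Type*} [Field F] {q : F}

lemma qPoch_zero (a : F) : qPoch q a 0 = 1 := prod_range_zero _

lemma qPoch_self_succ (n : ℕ) : qPoch q q (n + 1) = qPoch q q n * (1 - q ^ (n + 1)) := by
  rw [qPoch, prod_range_succ, ← pow_succ']
  rfl

lemma qBinom_of_lt {n i : ℕ} (h : n < i) : qBinom q n i = 0 := if_neg (by omega)

lemma qBinom_of_le {n i : ℕ} (h : i ≤ n) :
    qBinom q n i = qPoch q q n / (qPoch q q i * qPoch q q (n - i)) := if_pos h

variable (hq : ∀ m : ℕ, 0 < m → q ^ m ≠ 1)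
include hq

lemma one_sub_pow_ne_zero {m : ℕ} (hm : 0 < m) : 1 - q ^ m ≠ 0 :=
  sub_ne_zero.2 (hq m hm).symm

lemma qPoch_self_ne_zero (n : ℕ) : qPoch q q n ≠ 0 :=
  prod_ne_zero_iff.2 fun j _ => by
    rw [← pow_succ']
    exact one_sub_pow_ne_zero hq j.succ_pos

lemma qBinom_zero_right (n : ℕ) : qBinom q n 0 = 1 := by
  rw [qBinom_of_le n.zero_le, Nat.sub_zero, qPoch_zero, one_mul,
    div_self (qPoch_self_ne_zero hq n)]

lemma qBinom_self (n : ℕ) : qBinom q n n = 1 := by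
  rw [qBinom_of_le le_rfl, Nat.sub_self, qPoch_zero, mul_one,
    div_self (qPoch_self_ne_zero hq n)]

lemma qBinom_succ_succ (n i : ℕ) :
    qBinom q (n + 1) (i + 1) = qBinom q n (i + 1) + q ^ (n - i) * qBinom q n i := by
  rcases lt_trichotomy i n with hin | rfl | hni
  · obtain ⟨c, rfl⟩ := Nat.exists_eq_add_of_lt hin
    rw [qBinom_of_le (by omega), qBinom_of_le (by omega), qBinom_of_le (by omega),
      show i + c + 1 + 1 - (i + 1) = c + 1 by omega, show i + c + 1 - (i + 1) = c by omega,
      show i + c + 1 - i = c + 1 by omega, qPoch_self_succ (i + c + 1), qPoch_self_succ i,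
      qPoch_self_succ c]
    have := one_sub_pow_ne_zero hq i.succ_pos
    have := one_sub_pow_ne_zero hq c.succ_pos
    field_simp [qPoch_self_ne_zero hq]
    ring
  · rw [qBinom_self hq, qBinom_of_lt (Nat.lt_succ_self i), qBinom_self hq, Nat.sub_self,
      pow_zero, zero_add, one_mul]
  · rw [qBinom_of_lt (by omega), qBinom_of_lt (by omega), qBinom_of_lt hni, mul_zero, add_zero]

lemma qBinom_mul_qBinom {n m i : ℕ} (him : i ≤ m) (hmn : m ≤ n) :
    qBinom q n m * qBinom q m i = qBinom q n i * qBinom q (n - i) (m - i) := by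
  rw [qBinom_of_le hmn, qBinom_of_le him, qBinom_of_le (him.trans hmn),
    qBinom_of_le (by omega : m - i ≤ n - i), show n - i - (m - i) = n - m by omega]
  field_simp [qPoch_self_ne_zero hq]

lemma qPoch_self_eq_qFact (n : ℕ) : qPoch q q n = (1 - q) ^ n * qFact q n := by
  have h1 : (1 : F) - q ≠ 0 := by simpa using one_sub_pow_ne_zero hq one_pos
  calc qPoch q q n = ∏ j ∈ range n, (1 - q) * qInt q (j + 1) :=
        prod_congr rfl fun j _ => by rw [qInt, mul_div_cancel₀ _ h1, pow_succ']
    _ = (1 - q) ^ n * qFact q n := by rw [← pow_card_mul_prod, card_range, qFact]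

lemma qFact_div_eq_qBinom_mul_qBinom {n i j : ℕ} (h : i + j ≤ n) :
    qFact q n / (qFact q i * qFact q j * qFact q (n - i - j)) =
      qBinom q n i * qBinom q (n - i) j := by
  have h1 : (1 : F) - q ≠ 0 := by simpa using one_sub_pow_ne_zero hq one_pos
  have hfact : ∀ m, qFact q m ≠ 0 := fun m => by
    simpa [qPoch_self_eq_qFact hq, h1] using qPoch_self_ne_zero hq m
  obtain ⟨r, rfl⟩ := Nat.exists_eq_add_of_le h
  rw [qBinom_of_le (by omega), qBinom_of_le (by omega : j ≤ i + j + r - i)]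
  simp only [qPoch_self_eq_qFact hq, show i + j + r - i = j + r by omega,
    Nat.add_sub_cancel_left, pow_add]
  field_simp [hfact]

end QBinomial

section QConv

variable {F : Type*} [Field F]

def qConv (q : F) (n : ℕ) (f g : ℕ → F) : F :=
  ∑ i ∈ range (n + 1), qBinom q n i * f i * g (n - i)

variable {q : F}

lemma pow_mul_qConv (t : F) (n : ℕ) (f g : ℕ → F) :
    t ^ n * qConv q n f g = qConv q n (fun i => t ^ i * f i) (fun i => t ^ i * g i) := by
  rw [qConv, qConv, mul_sum]
  refine sum_congr rfl fun i hi => ?_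
  rw [← pow_mul_pow_sub t (Nat.le_of_lt_succ (mem_range.1 hi))]
  ring

lemma qConv_assoc (hq : ∀ m : ℕ, 0 < m → q ^ m ≠ 1) (n : ℕ) (f g h : ℕ → F) :
    qConv q n (fun j => qConv q j f g) h = qConv q n f (fun r => qConv q r g h) := by
  calc qConv q n (fun j => qConv q j f g) h
      = ∑ j ∈ Ico 0 (n + 1), ∑ i ∈ Ico 0 (j + 1),
          qBinom q n j * qBinom q j i * f i * g (j - i) * h (n - j) := by
        simp only [qConv, ← range_eq_Ico, mul_sum, sum_mul]
        refine sum_congr rfl fun j _ => sum_congr rfl fun i _ => by ring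
    _ = ∑ i ∈ range (n + 1), ∑ p ∈ range (n - i + 1),
          qBinom q n (i + p) * qBinom q (i + p) i * f i * g p * h (n - i - p) := by
        rw [← sum_Ico_Ico_comm, ← range_eq_Ico]
        refine sum_congr rfl fun i hi => ?_
        rw [sum_Ico_eq_sum_range, show n + 1 - i = n - i + 1 by
          have := mem_range.1 hi; omega]
        simp only [Nat.add_sub_cancel_left, Nat.sub_sub]
    _ = qConv q n f (fun r => qConv q r g h) := by
        simp only [qConv, mul_sum]
        refine sum_congr rfl fun i hi => sum_congr rfl fun p hp => ?_
        have hi := mem_range.1 hi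
        have hp := mem_range.1 hp
        rw [qBinom_mul_qBinom hq (by omega) (by omega), Nat.add_sub_cancel_left, Nat.sub_sub]
        ring

lemma qBracket3_eq_qConv (hq : ∀ m : ℕ, 0 < m → q ^ m ≠ 1) (n : ℕ) (u v w : F) :
    qBracket3 q n u v w = qConv q n (u ^ ·) (fun r => qConv q r (v ^ ·) (w ^ ·)) := by
  simp only [qBracket3, qConv, mul_sum]
  refine sum_congr rfl fun i hi => ?_
  have hi := mem_range.1 hi
  rw [show n + 1 - i = n - i + 1 by omega]
  refine sum_congr rfl fun j hj => ?_
  rw [qFact_div_eq_qBinom_mul_qBinom hq (by have := mem_range.1 hj; omega), Nat.sub_sub]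
  ring

end QConv

section Dual

variable {F : Type*} [Field F] {q : F}

lemma neg_one_pow_mul_qConv_qConv (hq : ∀ m : ℕ, 0 < m → q ^ m ≠ 1) (c : ℕ → F) (n : ℕ)
    (z x : F) :
    (-1) ^ n * qConv q n (fun j => qConv q j (fun m => (-1) ^ m * qConv q m c (fun _ => 1))
      (z ^ ·)) (x ^ ·) = qConv q n c (fun r => qBracket3 q r 1 (-z) (-x)) := by
  have sq : ∀ i, (-1 : F) ^ i * (-1) ^ i = 1 := fun i => pow_mul_pow_eq_one i (by norm_num)
  calc (-1) ^ n * qConv q n (fun j => qConv q j (fun m => (-1) ^ m * qConv q m c (fun _ => 1))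
          (z ^ ·)) (x ^ ·)
      = (-1) ^ n * qConv q n (fun i => (-1) ^ i * c i) (fun r => qConv q r
          (fun p => qConv q p (fun i => (-1) ^ i * 1) (z ^ ·)) (x ^ ·)) := by
        simp only [pow_mul_qConv (-1 : F) _ c, qConv_assoc hq]
    _ = qConv q n c (fun r => (-1) ^ r * qConv q r
          (fun p => qConv q p (fun i => (-1) ^ i * 1) (z ^ ·)) (x ^ ·)) := by
        simp only [pow_mul_qConv (-1 : F) n, ← mul_assoc, sq, one_mul]
    _ = qConv q n c (fun r => qConv q r
          (fun p => qConv q p (fun _ => 1) ((-z) ^ ·)) ((-x) ^ ·)) := by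
        simp only [pow_mul_qConv, ← mul_assoc, sq, one_mul, neg_pow z, neg_pow x]
    _ = qConv q n c (fun r => qBracket3 q r 1 (-z) (-x)) := by
        simp only [qConv_assoc hq, qBracket3_eq_qConv hq, one_pow]

lemma ApolyTri_eq_qConv_AstarPoly (hq : ∀ m : ℕ, 0 < m → q ^ m ≠ 1) (a : ℕ → F) (n : ℕ)
    (z x : F) :
    ApolyTri q a n z x = (-1) ^ n * qConv q n (fun j => AstarPoly q a j z) (x ^ ·) := by
  have hDual : ∀ m, qDual q a m =
      qConv q m (fun i => (-1) ^ i * q ^ i.choose 2 * a i) (fun _ => 1) :=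
    fun _ => sum_congr rfl fun _ _ => by ring
  have hAstar : ∀ j, AstarPoly q a j z = qConv q j (fun m => (-1) ^ m * qDual q a m) (z ^ ·) :=
    fun _ => sum_congr rfl fun _ _ => by ring
  have hTri : ApolyTri q a n z x = qConv q n (fun i => (-1) ^ i * q ^ i.choose 2 * a i)
      (fun r => qBracket3 q r 1 (-z) (-x)) :=
    sum_congr rfl fun _ _ => by ring
  simp only [hTri, hAstar, hDual, neg_one_pow_mul_qConv_qConv hq]

end Dual

section AlternatingSums

variable {F : Type*} [Field F] {q : F}

lemma qConv_eq_sum_range_of_le {n N : ℕ} (h : n ≤ N) (f g : ℕ → F) :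
    qConv q n f g = ∑ i ∈ range (N + 1), qBinom q n i * f i * g (n - i) := by
  refine sum_subset (range_subset_range.2 (by omega)) fun i _ hi => ?_
  rw [qBinom_of_lt (by simpa using hi), zero_mul, zero_mul]

variable (hq : ∀ m : ℕ, 0 < m → q ^ m ≠ 1)
include hq

lemma sum_neg_one_pow_qBinom_succ (f : ℕ → F) (k : ℕ) :
    ∑ j ∈ range (k + 2), (-1) ^ j * qBinom q (k + 1) j * f j * q ^ (k + 1 - j).choose 2 =
      ∑ j ∈ range (k + 1),
        (-1) ^ j * qBinom q k j * (q ^ (k - j) * (f j - f (j + 1))) * q ^ (k - j).choose 2 := by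
  set A : ℕ → F := fun j => (-1) ^ j * qBinom q k j * f j * q ^ (k + 1 - j).choose 2
  have hchoose : ∀ j ∈ range (k + 1), (k + 1 - j).choose 2 = (k - j).choose 2 + (k - j) :=
    fun j hj => by
      rw [show k + 1 - j = k - j + 1 by have := mem_range.1 hj; omega, Nat.choose_succ_succ',
        Nat.choose_one_right, add_comm]
  calc ∑ j ∈ range (k + 2), (-1) ^ j * qBinom q (k + 1) j * f j * q ^ (k + 1 - j).choose 2
      = ∑ j ∈ range (k + 1), (A (j + 1) -
          (-1) ^ j * qBinom q k j * (q ^ (k - j) * f (j + 1)) * q ^ (k - j).choose 2) + A 0 := by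
        rw [sum_range_succ']
        congr 1
        · refine sum_congr rfl fun j _ => ?_
          rw [qBinom_succ_succ hq]
          simp only [A, Nat.add_sub_add_right]
          ring
        · simp only [A, qBinom_zero_right hq]
    _ = ∑ j ∈ range (k + 1), (A j -
          (-1) ^ j * qBinom q k j * (q ^ (k - j) * f (j + 1)) * q ^ (k - j).choose 2) := by
        rw [sum_sub_distrib, sum_sub_distrib, sub_add_eq_add_sub, ← sum_range_succ',
          sum_range_succ]
        simp only [A, qBinom_of_lt (Nat.lt_succ_self k)]
        ring
    _ = _ := sum_congr rfl fun j hj => by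
        simp only [A, hchoose j hj, pow_add]
        ring

lemma sum_neg_one_pow_qBinom_mul_qBinom_add (l k i : ℕ) :
    ∑ j ∈ range (k + 1), (-1) ^ j * qBinom q k j * qBinom q (l + j) i * q ^ (k - j).choose 2 =
      if k ≤ i then (-1) ^ k * q ^ (k * (k + l - i)) * qBinom q l (i - k) else 0 := by
  induction k generalizing i with
  | zero => simp [qBinom_zero_right hq]
  | succ k ih =>
    rw [sum_neg_one_pow_qBinom_succ hq]
    rcases i with _ | i
    · simp [qBinom_zero_right hq]
    have hdiff : ∀ j ∈ range (k + 1),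
        q ^ (k - j) * (qBinom q (l + j) (i + 1) - qBinom q (l + (j + 1)) (i + 1)) =
          -q ^ (k + l - i) * qBinom q (l + j) i := fun j hj => by
      rw [← add_assoc, qBinom_succ_succ hq]
      rcases le_or_gt i (l + j) with hi | hi
      · rw [show k + l - i = k - j + (l + j - i) by have := mem_range.1 hj; omega, pow_add]
        ring
      · rw [qBinom_of_lt hi]
        ring
    calc ∑ j ∈ range (k + 1), (-1) ^ j * qBinom q k j *
          (q ^ (k - j) * (qBinom q (l + j) (i + 1) - qBinom q (l + (j + 1)) (i + 1))) *
          q ^ (k - j).choose 2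
        = -q ^ (k + l - i) * ∑ j ∈ range (k + 1),
            (-1) ^ j * qBinom q k j * qBinom q (l + j) i * q ^ (k - j).choose 2 := by
          rw [mul_sum]
          exact sum_congr rfl fun j hj => by rw [hdiff j hj]; ring
      _ = _ := by
          rw [ih]
          by_cases hki : k ≤ i
          · rw [if_pos hki, if_pos (by omega), show k + 1 + l - (i + 1) = k + l - i by omega,
              show i + 1 - (k + 1) = i - k by omega]
            ring
          · rw [if_neg hki, if_neg (by omega), mul_zero]

lemma sum_neg_one_pow_qBinom_mul_qConv (b : ℕ → F) (x : F) (k l : ℕ) :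
    ∑ j ∈ range (k + 1),
        (-1) ^ j * qBinom q k j * x ^ (k - j) * qConv q (l + j) b (x ^ ·) * q ^ (k - j).choose 2 =
      (-1) ^ k *
        ∑ j ∈ range (l + 1), qBinom q l j * x ^ (l - j) * b (k + j) * q ^ (k * (l - j)) := by
  calc ∑ j ∈ range (k + 1),
        (-1) ^ j * qBinom q k j * x ^ (k - j) * qConv q (l + j) b (x ^ ·) * q ^ (k - j).choose 2
      = ∑ j ∈ range (k + 1), ∑ i ∈ range (k + l + 1), b i * x ^ (k + l - i) *
          ((-1) ^ j * qBinom q k j * qBinom q (l + j) i * q ^ (k - j).choose 2) := by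
        refine sum_congr rfl fun j hj => ?_
        rw [qConv_eq_sum_range_of_le (by have := mem_range.1 hj; omega : l + j ≤ k + l),
          mul_sum, sum_mul]
        refine sum_congr rfl fun i _ => ?_
        rcases le_or_gt i (l + j) with hi | hi
        · rw [show k + l - i = k - j + (l + j - i) by have := mem_range.1 hj; omega, pow_add]
          ring
        · rw [qBinom_of_lt hi]
          ring
    _ = ∑ i ∈ range (k + (l + 1)), b i * x ^ (k + l - i) *
          if k ≤ i then (-1) ^ k * q ^ (k * (k + l - i)) * qBinom q l (i - k) else 0 := by
        rw [sum_comm]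
        exact sum_congr rfl fun i _ => by
          rw [← mul_sum, sum_neg_one_pow_qBinom_mul_qBinom_add hq]
    _ = _ := by
        rw [sum_range_add, sum_eq_zero fun i hi => by rw [if_neg (by simpa using hi), mul_zero],
          zero_add, mul_sum]
        refine sum_congr rfl fun j _ => ?_
        rw [if_pos (Nat.le_add_right k j), show k + l - (k + j) = l - j by omega,
          Nat.add_sub_cancel_left]
        ring

end AlternatingSums

theorem stmt4_general {F : Type*} [Field F] (q : F)
    (hq : ∀ m : ℕ, 0 < m → q ^ m ≠ 1) (a : ℕ → F) (k l : ℕ) (x z : F) :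
    (-1 : F) ^ l * ∑ j ∈ Finset.range (l + 1), qBinom q l j * x ^ (l - j) *
        AstarPoly q a (k + j) z * q ^ (k * (l - j)) =
    (-1 : F) ^ k * ∑ j ∈ Finset.range (k + 1), qBinom q k j * x ^ (k - j) *
        ApolyTri q a (l + j) z x * q ^ ((k - j).choose 2) := by
  have hsq : (-1 : F) ^ k * (-1) ^ k = 1 := pow_mul_pow_eq_one k (by norm_num)
  calc _ = (-1 : F) ^ l * ((-1) ^ k * ∑ j ∈ range (k + 1), (-1) ^ j * qBinom q k j *
        x ^ (k - j) * qConv q (l + j) (fun i => AstarPoly q a i z) (x ^ ·) *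
        q ^ (k - j).choose 2) := by
        rw [sum_neg_one_pow_qBinom_mul_qConv hq, ← mul_assoc ((-1 : F) ^ k), hsq, one_mul]
    _ = _ := by
        rw [mul_left_comm, mul_sum]
        congr 1
        refine sum_congr rfl fun j _ => ?_
        rw [ApolyTri_eq_qConv_AstarPoly hq, pow_add]
        ring

theorem stmt4 {F : Type*} [Field F] (q : F) (hq0 : q ≠ 0)
    (hq : ∀ m : ℕ, 0 < m → q ^ m ≠ 1) (a : ℕ → F) (k l : ℕ) (x z : F) :
    (-1 : F) ^ l * ∑ j ∈ Finset.range (l + 1), qBinom q l j * x ^ (l - j) *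
        AstarPoly q a (k + j) z * q ^ (k * (l - j)) =
    (-1 : F) ^ k * ∑ j ∈ Finset.range (k + 1), qBinom q k j * x ^ (k - j) *
        ApolyTri q a (l + j) z x * q ^ ((k - j).choose 2) :=
  stmt4_general q hq a k l x z
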